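/- arXiv:1209.0871 — 4 statements merged into one kernel-verified Lean document; each statement's English description precedes it below -/
import Mathlib

section
/- Let G be a finite 2-group generated by g₁, ..., g_k such that the index [⟨g₁,...,g_i⟩ : ⟨g₁,...,g_{i-1}⟩] ≤ 2 for all i (a smooth generating sequence). Let H ≤ G be a subgroup of index 2, let j = min{i : g_i ∉ H}, and define β_i = g_i if g_i ∈ H and β_i = g_j⁻¹ g_i otherwise. Then (β₁, ..., β_k) is a smooth generating sequence for H; in particular β₁, ..., β_k generate H. -/
/-!
Write `A n = ⟨g₀, …, g_{n-1}⟩` and `B n = ⟨β₀, …, β_{n-1}⟩`; we show `B n = A n ⊓ H` by induction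
on `n`. Since `A n ⊓ H = A n ⊓ (A (n+1) ⊓ H)`, the index `[A (n+1) ⊓ H : A n ⊓ H]` is at most
`[A (n+1) : A n] ≤ 2`, so there is no subgroup strictly between `A n ⊓ H` and `A (n+1) ⊓ H`. Hence
adjoining `β_n ∈ A (n+1) ⊓ H` to `A n ⊓ H` yields `A (n+1) ⊓ H` as soon as `β_n ∉ A n`. The latter
fails only if `g_n ∈ A n` (then nothing changes) or `n = j`: then `β_n = 1`, `A j ≤ H`, and
`A (j+1) ⊓ H` is a proper subgroup of `A (j+1)` containing `A j`, hence equal to it.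
-/

attribute [local instance] Subgroup.isFiniteRelIndex_of_finiteIndex

namespace Subgroup

variable {G : Type*} [Group G]

theorem eq_or_eq_of_relIndex_le_two {K M L : Subgroup G} [K.IsFiniteRelIndex L]
    (hKM : K ≤ M) (hML : M ≤ L) (h2 : K.relIndex L ≤ 2) : M = K ∨ M = L := by
  have hmul := relIndex_mul_relIndex K M L hKM hML
  have h0 : K.relIndex L ≠ 0 := relIndex_ne_zero
  have hone : K.relIndex M = 1 ∨ M.relIndex L = 1 := by
    by_contra! h
    have ha : K.relIndex M ≠ 0 := fun h' => h0 (by rw [← hmul, h', zero_mul])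
    have hb : M.relIndex L ≠ 0 := fun h' => h0 (by rw [← hmul, h', mul_zero])
    have : 2 * 2 ≤ K.relIndex M * M.relIndex L := Nat.mul_le_mul (by omega) (by omega)
    omega
  rcases hone with h | h
  · exact Or.inl (le_antisymm (relIndex_eq_one.1 h) hKM)
  · exact Or.inr (le_antisymm hML (relIndex_eq_one.1 h))

theorem relIndex_inf_le_relIndex {A A' : Subgroup G} (H : Subgroup G) [A.IsFiniteRelIndex A']
    (h : A ≤ A') : (A ⊓ H).relIndex (A' ⊓ H) ≤ A.relIndex A' :=
  calc (A ⊓ H).relIndex (A' ⊓ H) = (A ⊓ (A' ⊓ H)).relIndex (A' ⊓ H) := by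
        rw [← inf_assoc, inf_of_le_left h]
    _ = A.relIndex (A' ⊓ H) := inf_relIndex_right _ _
    _ ≤ A.relIndex A' := relIndex_le_of_le_right inf_le_left relIndex_ne_zero

theorem inf_sup_zpowers_eq_of_relIndex_le_two [Finite G] {A A' H : Subgroup G} (h : A ≤ A')
    (h2 : A.relIndex A' ≤ 2) {y : G} (hy : y ∈ A' ⊓ H) (hyA : y ∉ A) :
    A ⊓ H ⊔ zpowers y = A' ⊓ H := by
  have hle : A ⊓ H ⊔ zpowers y ≤ A' ⊓ H :=
    sup_le (inf_le_inf_right H h) (zpowers_le.2 hy)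
  refine (eq_or_eq_of_relIndex_le_two le_sup_left hle
    ((relIndex_inf_le_relIndex H h).trans h2)).resolve_left fun heq => hyA ?_
  have : y ∈ A ⊓ H := heq ▸ mem_sup_right (mem_zpowers y)
  exact this.1

end Subgroup

section PrefixClosure

variable {G : Type*} [Group G] {k : ℕ}

def prefixClosure (g : Fin k → G) (n : ℕ) : Subgroup G :=
  Subgroup.closure (g '' {i | (i : ℕ) < n})

theorem prefixClosure_mono (g : Fin k → G) : Monotone (prefixClosure g) := fun _ _ hmn =>
  Subgroup.closure_mono (Set.image_mono fun _ hi => lt_of_lt_of_le hi hmn)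

theorem mem_prefixClosure (g : Fin k → G) {n : ℕ} {i : Fin k} (hi : (i : ℕ) < n) :
    g i ∈ prefixClosure g n :=
  Subgroup.subset_closure (Set.mem_image_of_mem g hi)

theorem prefixClosure_le_iff {g : Fin k → G} {n : ℕ} {H : Subgroup G} :
    prefixClosure g n ≤ H ↔ ∀ i : Fin k, (i : ℕ) < n → g i ∈ H := by
  simp [prefixClosure, Subgroup.closure_le, Set.subset_def]

theorem prefixClosure_succ (g : Fin k → G) {n : ℕ} (hn : n < k) :
    prefixClosure g (n + 1) = prefixClosure g n ⊔ Subgroup.zpowers (g ⟨n, hn⟩) := by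
  have hset : {i : Fin k | (i : ℕ) < n + 1} = {i : Fin k | (i : ℕ) < n} ∪ {(⟨n, hn⟩ : Fin k)} := by
    ext i
    simp [Fin.ext_iff, Nat.le_iff_lt_or_eq, or_comm]
  rw [prefixClosure, hset, Set.image_union, Set.image_singleton, Subgroup.closure_union,
    Subgroup.zpowers_eq_closure, prefixClosure]

theorem prefixClosure_of_le (g : Fin k → G) {n : ℕ} (hkn : k ≤ n) :
    prefixClosure g n = Subgroup.closure (Set.range g) := by
  rw [prefixClosure, ← Set.image_univ]
  congr
  ext i
  simpa using lt_of_lt_of_le i.isLt hkn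

end PrefixClosure

section IndexTwo

variable {G : Type*} [Group G] {k : ℕ} {g β : Fin k → G} {H : Subgroup G}
  [DecidablePred (· ∈ H)] {j : Fin k}

theorem mem_prefixClosure_succ_inf (hH : H.index = 2) (hj : g j ∉ H)
    (hjmin : ∀ i : Fin k, (i : ℕ) < (j : ℕ) → g i ∈ H)
    (hβ : ∀ i : Fin k, β i = if g i ∈ H then g i else (g j)⁻¹ * g i) (i : Fin k) :
    β i ∈ prefixClosure g (i + 1) ⊓ H := by
  rw [hβ]
  split_ifs with hi
  · exact Subgroup.mem_inf.2 ⟨mem_prefixClosure g (Nat.lt_succ_self i), hi⟩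
  · have hji : (j : ℕ) < i + 1 := Nat.lt_succ_of_le (not_lt.1 fun h => hi (hjmin i h))
    refine Subgroup.mem_inf.2
      ⟨mul_mem (inv_mem (mem_prefixClosure g hji)) (mem_prefixClosure g (Nat.lt_succ_self i)), ?_⟩
    simp [Subgroup.mul_mem_iff_of_index_two hH, hj, hi]

variable [Finite G]

theorem prefixClosure_succ_eq_inf (hH : H.index = 2) (hj : g j ∉ H)
    (hjmin : ∀ i : Fin k, (i : ℕ) < (j : ℕ) → g i ∈ H)
    (hβ : ∀ i : Fin k, β i = if g i ∈ H then g i else (g j)⁻¹ * g i) {n : ℕ} (hn : n < k)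
    (hsmooth : (prefixClosure g n).relIndex (prefixClosure g (n + 1)) ≤ 2)
    (ih : prefixClosure β n = prefixClosure g n ⊓ H) :
    prefixClosure β (n + 1) = prefixClosure g (n + 1) ⊓ H := by
  set i : Fin k := ⟨n, hn⟩
  have hβi := mem_prefixClosure_succ_inf hH hj hjmin hβ i
  have hmono := prefixClosure_mono g n.le_succ
  rw [prefixClosure_succ β hn, ih]
  by_cases hgi : g i ∈ prefixClosure g n
  · have hstable : prefixClosure g (n + 1) = prefixClosure g n := by
      rw [prefixClosure_succ g hn, sup_eq_left.2 (Subgroup.zpowers_le.2 hgi)]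
    rw [hstable] at hβi ⊢
    exact sup_eq_left.2 (Subgroup.zpowers_le.2 hβi)
  by_cases hij : i = j
  · have hAH : prefixClosure g n ≤ H := prefixClosure_le_iff.2 fun i' hi' => hjmin i' (hij ▸ hi')
    have hβ1 : β i = 1 := by rw [hβ, hij, if_neg hj, inv_mul_cancel]
    rw [hβ1, Subgroup.zpowers_one_eq_bot, sup_bot_eq, inf_eq_left.2 hAH]
    refine ((Subgroup.eq_or_eq_of_relIndex_le_two (le_inf hmono hAH) inf_le_left
      hsmooth).resolve_right fun heq => hj (inf_eq_left.1 heq ?_)).symm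
    exact mem_prefixClosure g (by rw [← hij]; exact n.lt_succ_self)
  · refine Subgroup.inf_sup_zpowers_eq_of_relIndex_le_two hmono hsmooth hβi fun hβA => hgi ?_
    rw [hβ] at hβA
    split_ifs at hβA with hgiH
    · exact hβA
    · have hjn : (j : ℕ) < n :=
        lt_of_le_of_ne (not_lt.1 fun h => hgiH (hjmin i h)) fun h => hij (Fin.ext h.symm)
      simpa using mul_mem (mem_prefixClosure g hjn) hβA

theorem prefixClosure_eq_inf (hH : H.index = 2) (hj : g j ∉ H)
    (hjmin : ∀ i : Fin k, (i : ℕ) < (j : ℕ) → g i ∈ H)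
    (hβ : ∀ i : Fin k, β i = if g i ∈ H then g i else (g j)⁻¹ * g i)
    (hsmooth : ∀ n < k, (prefixClosure g n).relIndex (prefixClosure g (n + 1)) ≤ 2) :
    ∀ n ≤ k, prefixClosure β n = prefixClosure g n ⊓ H
  | 0, _ => by simp [prefixClosure]
  | n + 1, hn => prefixClosure_succ_eq_inf hH hj hjmin hβ hn (hsmooth n hn)
      (prefixClosure_eq_inf hH hj hjmin hβ hsmooth n (n.le_succ.trans hn))

end IndexTwo

theorem stmt4_general {G : Type*} [Group G] [Finite G]
    (k : ℕ) (g : Fin k → G)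
    (hgen : Subgroup.closure (Set.range g) = ⊤)
    (hsmooth : ∀ i : ℕ, i < k →
      (Subgroup.closure (g '' {j : Fin k | (j : ℕ) < i})).relIndex
        (Subgroup.closure (g '' {j : Fin k | (j : ℕ) < i + 1})) ≤ 2)
    (H : Subgroup G) [DecidablePred (· ∈ H)] (hH : H.index = 2)
    (j : Fin k) (hj : g j ∉ H) (hjmin : ∀ i : Fin k, (i : ℕ) < (j : ℕ) → g i ∈ H)
    (β : Fin k → G)
    (hβ : ∀ i : Fin k, β i = if g i ∈ H then g i else (g j)⁻¹ * g i) :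
    Subgroup.closure (Set.range β) = H ∧
    ∀ i : ℕ, i < k →
      (Subgroup.closure (β '' {j' : Fin k | (j' : ℕ) < i})).relIndex
        (Subgroup.closure (β '' {j' : Fin k | (j' : ℕ) < i + 1})) ≤ 2 := by
  have hB := prefixClosure_eq_inf hH hj hjmin hβ hsmooth
  refine ⟨?_, fun n hn => ?_⟩
  · rw [← prefixClosure_of_le β le_rfl, hB k le_rfl, prefixClosure_of_le g le_rfl, hgen,
      top_inf_eq]
  · change (prefixClosure β n).relIndex (prefixClosure β (n + 1)) ≤ 2
    rw [hB n hn.le, hB (n + 1) hn]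
    exact (Subgroup.relIndex_inf_le_relIndex H (prefixClosure_mono g n.le_succ)).trans
      (hsmooth n hn)

theorem stmt4 {G : Type*} [Group G] [Finite G] (hG : IsPGroup 2 G)
    (k : ℕ) (g : Fin k → G)
    (hgen : Subgroup.closure (Set.range g) = ⊤)
    (hsmooth : ∀ i : ℕ, i < k →
      (Subgroup.closure (g '' {j : Fin k | (j : ℕ) < i})).relIndex
        (Subgroup.closure (g '' {j : Fin k | (j : ℕ) < i + 1})) ≤ 2)
    (H : Subgroup G) [DecidablePred (· ∈ H)] (hH : H.index = 2)
    (j : Fin k) (hj : g j ∉ H) (hjmin : ∀ i : Fin k, (i : ℕ) < (j : ℕ) → g i ∈ H)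
    (β : Fin k → G)
    (hβ : ∀ i : Fin k, β i = if g i ∈ H then g i else (g j)⁻¹ * g i) :
    Subgroup.closure (Set.range β) = H ∧
    ∀ i : ℕ, i < k →
      (Subgroup.closure (β '' {j' : Fin k | (j' : ℕ) < i})).relIndex
        (Subgroup.closure (β '' {j' : Fin k | (j' : ℕ) < i + 1})) ≤ 2 :=
  stmt4_general k g hgen hsmooth H hH j hj hjmin β hβ
end

section
/- Let φ : G → K be a surjective group homomorphism between finite groups. If (g₁, ..., g_k) is a smooth generating sequence for G, then (φ(g₁), ..., φ(g_k)) is a smooth generating sequence for K. -/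
namespace Subgroup

variable {G K : Type*} [Group G] [Group K]

theorem relIndex_map_map_dvd (f : G →* K) (H L : Subgroup G) :
    (H.map f).relIndex (L.map f) ∣ H.relIndex L := by
  rw [← relIndex_comap]
  exact relIndex_dvd_of_le_left L (le_comap_map f H)

theorem relIndex_map_map_le (f : G →* K) {H L : Subgroup G} (hHL : H.relIndex L ≠ 0) :
    (H.map f).relIndex (L.map f) ≤ H.relIndex L :=
  Nat.le_of_dvd (Nat.pos_of_ne_zero hHL) (relIndex_map_map_dvd f H L)

end Subgroup

namespace Group

open Subgroup

variable {G K : Type*} [Group G] [Group K]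

/-- Indices are 0-based: the condition at `i` compares the subgroups generated by the first `i`
and the first `i + 1` terms. An infinite index counts as `relIndex = 0`, so the notion is only
meaningful for finite groups. -/
def IsSmoothGeneratingSeq {k : ℕ} (g : Fin k → G) : Prop :=
  closure (Set.range g) = ⊤ ∧
    ∀ i < k, (closure (g '' {j | (j : ℕ) < i})).relIndex (closure (g '' {j | (j : ℕ) < i + 1})) ≤ 2

theorem IsSmoothGeneratingSeq.map [Finite G] {k : ℕ} {g : Fin k → G}
    (hg : IsSmoothGeneratingSeq g) (φ : G →* K) (hφ : Function.Surjective φ) :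
    IsSmoothGeneratingSeq (φ ∘ g) := by
  obtain ⟨hgen, hsmooth⟩ := hg
  refine ⟨?_, fun i hi => ?_⟩
  · rw [Set.range_comp, ← MonoidHom.map_closure, hgen, ← MonoidHom.range_eq_map,
      MonoidHom.range_eq_top.mpr hφ]
  · simp only [Set.image_comp, ← MonoidHom.map_closure]
    exact (relIndex_map_map_le φ index_ne_zero_of_finite).trans (hsmooth i hi)

end Group

theorem stmt5_general {G K : Type*} [Group G] [Group K] [Finite G]
    (φ : G →* K) (hφ : Function.Surjective φ)
    (k : ℕ) (g : Fin k → G)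
    (hgen : Subgroup.closure (Set.range g) = ⊤)
    (hsmooth : ∀ i : ℕ, i < k →
      (Subgroup.closure (g '' {j : Fin k | (j : ℕ) < i})).relIndex
        (Subgroup.closure (g '' {j : Fin k | (j : ℕ) < i + 1})) ≤ 2) :
    Subgroup.closure (Set.range (φ ∘ g)) = ⊤ ∧
    ∀ i : ℕ, i < k →
      (Subgroup.closure ((φ ∘ g) '' {j : Fin k | (j : ℕ) < i})).relIndex
        (Subgroup.closure ((φ ∘ g) '' {j : Fin k | (j : ℕ) < i + 1})) ≤ 2 :=
  Group.IsSmoothGeneratingSeq.map ⟨hgen, hsmooth⟩ φ hφ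

theorem stmt5 {G K : Type*} [Group G] [Group K] [Finite G] [Finite K]
    (φ : G →* K) (hφ : Function.Surjective φ)
    (k : ℕ) (g : Fin k → G)
    (hgen : Subgroup.closure (Set.range g) = ⊤)
    (hsmooth : ∀ i : ℕ, i < k →
      (Subgroup.closure (g '' {j : Fin k | (j : ℕ) < i})).relIndex
        (Subgroup.closure (g '' {j : Fin k | (j : ℕ) < i + 1})) ≤ 2) :
    Subgroup.closure (Set.range (φ ∘ g)) = ⊤ ∧
    ∀ i : ℕ, i < k →
      (Subgroup.closure ((φ ∘ g) '' {j : Fin k | (j : ℕ) < i})).relIndex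
        (Subgroup.closure ((φ ∘ g) '' {j : Fin k | (j : ℕ) < i + 1})) ≤ 2 :=
  stmt5_general φ hφ k g hgen hsmooth
end

section
/- Let G ≤ Sym(A), σ ∈ Sym(A), B a G-stable subset on which G acts transitively, {B₁, B₂} a G-invariant block system, H = {g ∈ G : g(B₁) = B₁} the stabilizer of B₁, and τ ∈ G \ H. Then C_B(σG) = C_{B₂}(C_{B₁}(σH)) ∪ C_{B₂}(C_{B₁}(στH)), where a permutation is in C_{B'}(T) if it is in T and preserves the color (with respect to a fixed coloring c : A → C) of every element of B'. -/
/-- `CB c B' T` = the elements of `T` preserving the color of every element of `B'`. -/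
def CB {A C : Type*} (c : A → C) (B' : Set A) (T : Set (Equiv.Perm A)) :
    Set (Equiv.Perm A) :=
  {τ ∈ T | ∀ b ∈ B', c (τ b) = c b}

theorem stmt10 {A C : Type*} [Fintype A] (G : Subgroup (Equiv.Perm A))
    (σ : Equiv.Perm A) (c : A → C) (B B₁ B₂ : Set A)
    (hBst : ∀ g ∈ G, (g · : A → A) '' B = B)
    (htrans : ∀ x ∈ B, ∀ y ∈ B, ∃ g ∈ G, g x = y)
    (h1 : B₁.Nonempty) (h2 : B₂.Nonempty) (hdisj : Disjoint B₁ B₂)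
    (hun : B = B₁ ∪ B₂)
    (hblock : ∀ g ∈ G, ((g · : A → A) '' B₁ = B₁ ∧ (g · : A → A) '' B₂ = B₂) ∨
        ((g · : A → A) '' B₁ = B₂ ∧ (g · : A → A) '' B₂ = B₁))
    (H : Subgroup (Equiv.Perm A))
    (hH : (H : Set (Equiv.Perm A)) = {g : Equiv.Perm A | g ∈ G ∧ (g · : A → A) '' B₁ = B₁})
    (τ : Equiv.Perm A) (hτG : τ ∈ G) (hτH : τ ∉ H) :
    CB c B {x : Equiv.Perm A | ∃ g ∈ G, x = σ * g} =
      CB c B₂ (CB c B₁ {x : Equiv.Perm A | ∃ h ∈ H, x = σ * h}) ∪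
      CB c B₂ (CB c B₁ {x : Equiv.Perm A | ∃ h ∈ H, x = σ * τ * h}) := by
  have hHmem : ∀ g : Equiv.Perm A, g ∈ H ↔ g ∈ G ∧ (g · : A → A) '' B₁ = B₁ := by
    intro g
    constructor
    · intro hg
      have : g ∈ (H : Set (Equiv.Perm A)) := hg
      rw [hH] at this
      exact this
    · intro hg
      have : g ∈ (H : Set (Equiv.Perm A)) := by rw [hH]; exact hg
      exact this
  -- τ maps B₁ onto B₂
  have hτB : (τ · : A → A) '' B₁ = B₂ := by
    rcases hblock τ hτG with ⟨h1', _⟩ | ⟨h1', _⟩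
    · exact absurd ((hHmem τ).mpr ⟨hτG, h1'⟩) hτH
    · exact h1'
  ext x
  simp only [CB, Set.mem_setOf_eq, Set.mem_union]
  constructor
  · rintro ⟨⟨g, hg, rfl⟩, hcol⟩
    have hc1 : ∀ b ∈ B₁, c ((σ * g) b) = c b := fun b hb =>
      hcol b (hun ▸ Set.mem_union_left _ hb)
    have hc2 : ∀ b ∈ B₂, c ((σ * g) b) = c b := fun b hb =>
      hcol b (hun ▸ Set.mem_union_right _ hb)
    rcases hblock g hg with ⟨h1', _⟩ | ⟨h1', _⟩
    · exact Or.inl ⟨⟨⟨g, (hHmem g).mpr ⟨hg, h1'⟩, rfl⟩, hc1⟩, hc2⟩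
    · refine Or.inr ⟨⟨⟨τ⁻¹ * g, ?_, by group⟩, hc1⟩, hc2⟩
      refine (hHmem _).mpr ⟨mul_mem (inv_mem hτG) hg, ?_⟩
      have : ((τ⁻¹ * g) · : A → A) '' B₁ = (τ⁻¹ · : A → A) '' ((g · : A → A) '' B₁) := by
        rw [← Set.image_comp]; rfl
      rw [this, h1', ← hτB, ← Set.image_comp]
      simp
  · rintro (⟨⟨⟨h, hh, rfl⟩, hc1⟩, hc2⟩ | ⟨⟨⟨h, hh, rfl⟩, hc1⟩, hc2⟩)
    · refine ⟨⟨h, ((hHmem h).mp hh).1, rfl⟩, ?_⟩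
      intro b hb
      rcases hun ▸ hb with hb | hb
      · exact hc1 b hb
      · exact hc2 b hb
    · refine ⟨⟨τ * h, mul_mem hτG ((hHmem h).mp hh).1, by group⟩, ?_⟩
      intro b hb
      rcases hun ▸ hb with hb | hb
      · exact hc1 b hb
      · exact hc2 b hb
end

section
/- Aut_e(X₁) for X₁ = ({a,b}, {{a,b}}) equals the group of order 2 generated by the transposition (a b); hence, by induction using that each kernel ker(π_r : Aut_e(X_{r+1}) → Aut_e(X_r)) is generated by transpositions with disjoint supports in a ternary graph (so is an elementary abelian 2-group), each Aut_e(X_r) is a 2-group. -/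
/-- Vertices of the subgraph `X_{r+1}` of `X` of paths of length `≤ r+1` through the
edge `e = {a,b}` (indexing shifted by one: `Vset X a b 0` is the vertex set of `X₁`). -/
def Vset {V : Type*} (X : SimpleGraph V) (a b : V) : ℕ → Set V
  | 0 => {a, b}
  | r + 1 => Vset X a b r ∪ {y | ∃ x ∈ Vset X a b r, X.Adj x y}

/-- Edges of the subgraph `X_{r+1}` (indexing shifted by one as in `Vset`). -/
def Eset {V : Type*} (X : SimpleGraph V) (a b : V) : ℕ → Set (Sym2 V)
  | 0 => {s(a, b)}
  | r + 1 => Eset X a b r ∪ {e | ∃ x y : V, e = s(x, y) ∧ X.Adj x y ∧ x ∈ Vset X a b r}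

/-- The automorphisms of the graph `X_{r+1}` fixing the edge `{a,b}` setwise. -/
def AutE {V : Type*} (X : SimpleGraph V) (a b : V) (r : ℕ) :
    Set (Equiv.Perm {v : V // v ∈ Vset X a b r}) :=
  {σ | (∀ x y : {v : V // v ∈ Vset X a b r},
          s(x.1, y.1) ∈ Eset X a b r ↔ s((σ x).1, (σ y).1) ∈ Eset X a b r) ∧
       ∀ (ha : a ∈ Vset X a b r) (hb : b ∈ Vset X a b r),
          s((σ ⟨a, ha⟩).1, (σ ⟨b, hb⟩).1) = s(a, b)}

/-! An element of `AutE X a b (r + 1)` fixes the edge `{a, b}` and preserves adjacency along the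
edges of `X_{r+2}`, so it maps every layer `Vset t` onto itself; restriction is therefore a
homomorphism to `AutE X a b r`. An element of its kernel fixes `Vset r` pointwise, so it permutes
the neighbours outside `Vset r` of each `x ∈ Vset r`. Since `x` also has a neighbour inside
`Vset r` and degree at most `3`, there are at most two of them, and the element is an involution.
So the kernels are `2`-groups, and by induction from `AutE X a b 0 = {1, (a b)}` every
`AutE X a b r` is a `2`-group. -/

open Equiv Function Set

theorem Function.Injective.apply_apply_eq_of_mapsTo_of_ncard_le_two {α : Type*} {f : α → α}
    (hf : Injective f) {s : Set α} (hs : s.Finite) (hcard : s.ncard ≤ 2) (hmaps : MapsTo f s s)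
    {x : α} (hx : x ∈ s) : f (f x) = x := by
  by_contra h
  have h₁ : f x ≠ x := fun h' => h (by rw [h', h'])
  have hthree : ({x, f x, f (f x)} : Set α).ncard = 3 :=
    ncard_eq_three.mpr ⟨x, f x, f (f x), h₁.symm, Ne.symm h, (hf.ne h₁).symm, rfl⟩
  have hsub : ({x, f x, f (f x)} : Set α) ⊆ s := by
    rintro _ (rfl | rfl | rfl)
    exacts [hx, hmaps hx, hmaps (hmaps hx)]
  have := ncard_le_ncard hsub hs
  omega

theorem SimpleGraph.ncard_neighborSet_diff_lt {V : Type*} [Finite V] (X : SimpleGraph V)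
    {s : Set V} {x w : V} (hw : X.Adj x w) (hws : w ∈ s) :
    (X.neighborSet x \ s).ncard < (X.neighborSet x).ncard :=
  ncard_lt_ncard ((ssubset_iff_of_subset sdiff_subset).mpr ⟨w, hw, fun h => h.2 hws⟩)

section Layers

variable {V : Type*} {X : SimpleGraph V} {a b : V}

theorem Vset_mono : Monotone (Vset X a b) :=
  monotone_nat_of_le_succ fun _ => subset_union_left

theorem left_mem_Vset (r : ℕ) : a ∈ Vset X a b r :=
  Vset_mono r.zero_le (mem_insert a _)

theorem right_mem_Vset (r : ℕ) : b ∈ Vset X a b r :=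
  Vset_mono r.zero_le (mem_insert_of_mem a rfl)

theorem exists_adj_mem_Vset (hab : X.Adj a b) {r : ℕ} {x : V} (hx : x ∈ Vset X a b r) :
    ∃ w ∈ Vset X a b r, X.Adj x w := by
  induction r generalizing x with
  | zero =>
    rcases hx with rfl | rfl
    exacts [⟨b, right_mem_Vset 0, hab⟩, ⟨a, left_mem_Vset 0, hab.symm⟩]
  | succ r ih =>
    rcases hx with hx | ⟨y, hy, hyx⟩
    · obtain ⟨w, hw, hxw⟩ := ih hx
      exact ⟨w, Vset_mono r.le_succ hw, hxw⟩
    · exact ⟨y, Vset_mono r.le_succ hy, hyx.symm⟩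

theorem mk_mem_newEdges_iff {r : ℕ} {x y : V} :
    s(x, y) ∈ {e | ∃ x' y' : V, e = s(x', y') ∧ X.Adj x' y' ∧ x' ∈ Vset X a b r} ↔
      X.Adj x y ∧ (x ∈ Vset X a b r ∨ y ∈ Vset X a b r) := by
  constructor
  · rintro ⟨x', y', hxy, hadj, hx'⟩
    rcases Sym2.eq_iff.mp hxy with ⟨rfl, rfl⟩ | ⟨rfl, rfl⟩
    exacts [⟨hadj, .inl hx'⟩, ⟨hadj.symm, .inr hx'⟩]
  · rintro ⟨hadj, hx | hy⟩
    exacts [⟨x, y, rfl, hadj, hx⟩, ⟨y, x, Sym2.eq_swap, hadj.symm, hy⟩]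

theorem mem_Eset_succ_iff (hab : X.Adj a b) {r : ℕ} {x y : V} :
    s(x, y) ∈ Eset X a b (r + 1) ↔ X.Adj x y ∧ (x ∈ Vset X a b r ∨ y ∈ Vset X a b r) := by
  refine ⟨fun h => ?_, fun h => .inr (mk_mem_newEdges_iff.mpr h)⟩
  induction r generalizing x y with
  | zero =>
    rcases h with h | h
    · rcases Sym2.eq_iff.mp h with ⟨rfl, rfl⟩ | ⟨rfl, rfl⟩
      exacts [⟨hab, .inl (left_mem_Vset 0)⟩, ⟨hab.symm, .inr (left_mem_Vset 0)⟩]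
    · exact mk_mem_newEdges_iff.mp h
  | succ r ih =>
    rcases h with h | h
    · exact (ih h).imp_right (Or.imp (Vset_mono r.le_succ ·) (Vset_mono r.le_succ ·))
    · exact mk_mem_newEdges_iff.mp h

end Layers

section Automorphisms

variable {V : Type*} {X : SimpleGraph V} {a b : V} {r : ℕ}

def baseEdge (X : SimpleGraph V) (a b : V) (r : ℕ) : Sym2 {v // v ∈ Vset X a b r} :=
  s(⟨a, left_mem_Vset r⟩, ⟨b, right_mem_Vset r⟩)

theorem mk_val_eq_iff_eq_baseEdge (x y : {v // v ∈ Vset X a b r}) :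
    s(x.1, y.1) = s(a, b) ↔ s(x, y) = baseEdge X a b r := by
  rw [← (Sym2.map.injective Subtype.val_injective).eq_iff]
  rfl

theorem mem_AutE_iff {σ : Perm {v // v ∈ Vset X a b r}} :
    σ ∈ AutE X a b r ↔
      (∀ x y : {v // v ∈ Vset X a b r},
        s(x.1, y.1) ∈ Eset X a b r ↔ s((σ x).1, (σ y).1) ∈ Eset X a b r) ∧
      Sym2.map σ (baseEdge X a b r) = baseEdge X a b r :=
  and_congr_right fun _ =>
    ⟨fun h => (mk_val_eq_iff_eq_baseEdge _ _).mp (h _ _),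
      fun h _ _ => (mk_val_eq_iff_eq_baseEdge _ _).mpr h⟩

theorem map_baseEdge_of_mem_AutE {σ : Perm {v // v ∈ Vset X a b r}} (hσ : σ ∈ AutE X a b r) :
    Sym2.map σ (baseEdge X a b r) = baseEdge X a b r :=
  (mem_AutE_iff.mp hσ).2

theorem map_eq_baseEdge_iff {σ : Perm {v // v ∈ Vset X a b r}}
    (hσ : Sym2.map σ (baseEdge X a b r) = baseEdge X a b r) (z : Sym2 {v // v ∈ Vset X a b r}) :
    Sym2.map σ z = baseEdge X a b r ↔ z = baseEdge X a b r := by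
  conv_lhs => rw [← hσ]
  exact (Sym2.map.injective σ.injective).eq_iff

theorem mem_AutE_zero_iff {σ : Perm {v // v ∈ Vset X a b 0}} :
    σ ∈ AutE X a b 0 ↔ Sym2.map σ (baseEdge X a b 0) = baseEdge X a b 0 := by
  refine mem_AutE_iff.trans ⟨And.right, fun hσ => ⟨fun x y => ?_, hσ⟩⟩
  simp only [Eset, mem_singleton_iff, mk_val_eq_iff_eq_baseEdge]
  exact (map_eq_baseEdge_iff hσ s(x, y)).symm

def autESubgroup (X : SimpleGraph V) (a b : V) (r : ℕ) :
    Subgroup (Perm {v // v ∈ Vset X a b r}) where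
  carrier := AutE X a b r
  one_mem' := ⟨fun _ _ => Iff.rfl, fun _ _ => rfl⟩
  mul_mem' {σ τ} hσ hτ := mem_AutE_iff.mpr
    ⟨fun x y => (hτ.1 x y).trans (hσ.1 (τ x) (τ y)), by
      rw [Perm.coe_mul, ← Sym2.map_map, map_baseEdge_of_mem_AutE hτ, map_baseEdge_of_mem_AutE hσ]⟩
  inv_mem' {σ} hσ := mem_AutE_iff.mpr
    ⟨fun x y => by simpa using (hσ.1 (σ⁻¹ x) (σ⁻¹ y)).symm, by
      conv_lhs => rw [← map_baseEdge_of_mem_AutE hσ]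
      rw [Sym2.map_map, ← Perm.coe_mul, inv_mul_cancel, Perm.coe_one, Sym2.map_id, id]⟩

theorem AutE_zero [DecidableEq V] (hab : X.Adj a b) :
    AutE X a b 0 = {1, swap ⟨a, left_mem_Vset 0⟩ ⟨b, right_mem_Vset 0⟩} := by
  set a' : {v // v ∈ Vset X a b 0} := ⟨a, left_mem_Vset 0⟩
  set b' : {v // v ∈ Vset X a b 0} := ⟨b, right_mem_Vset 0⟩
  have hab' : a' ≠ b' := fun h => hab.ne (congrArg Subtype.val h)
  have hcases : ∀ v : {v // v ∈ Vset X a b 0}, v = a' ∨ v = b' := by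
    rintro ⟨v, rfl | rfl⟩
    exacts [.inl rfl, .inr rfl]
  ext σ
  rw [mem_AutE_zero_iff, mem_insert_iff, mem_singleton_iff]
  constructor
  · intro hσ
    rcases Sym2.eq_iff.mp hσ with ⟨ha, hb⟩ | ⟨ha, hb⟩
    · left
      ext v : 1
      rcases hcases v with rfl | rfl
      exacts [ha, hb]
    · right
      ext v : 1
      rcases hcases v with rfl | rfl
      · rw [ha, swap_apply_left]
      · rw [hb, swap_apply_right]
  · rintro (rfl | rfl)
    · rw [Perm.coe_one, Sym2.map_id, id]
    · rw [baseEdge, Sym2.map_mk, swap_apply_left, swap_apply_right, Sym2.eq_swap]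

end Automorphisms

section Restriction

variable {V : Type*} {X : SimpleGraph V} {a b : V} {r : ℕ}

theorem mem_Vset_zero_iff_mem_baseEdge (v : {v // v ∈ Vset X a b r}) :
    v.1 ∈ Vset X a b 0 ↔ v ∈ baseEdge X a b r := by
  simp [Vset, baseEdge, Sym2.mem_iff, Subtype.ext_iff]

theorem adj_apply_of_mem_AutE (hab : X.Adj a b) {σ : Perm {v // v ∈ Vset X a b (r + 1)}}
    (hσ : σ ∈ AutE X a b (r + 1)) {x y : {v // v ∈ Vset X a b (r + 1)}}
    (hx : x.1 ∈ Vset X a b r) (hxy : X.Adj x.1 y.1) : X.Adj (σ x).1 (σ y).1 :=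
  ((mem_Eset_succ_iff hab).mp ((hσ.1 x y).mp ((mem_Eset_succ_iff hab).mpr ⟨hxy, .inl hx⟩))).1

theorem apply_mem_Vset_of_mem_AutE (hab : X.Adj a b) {σ : Perm {v // v ∈ Vset X a b (r + 1)}}
    (hσ : σ ∈ AutE X a b (r + 1)) (t : ℕ) {v : {v // v ∈ Vset X a b (r + 1)}}
    (hv : v.1 ∈ Vset X a b t) : (σ v).1 ∈ Vset X a b t := by
  induction t generalizing v with
  | zero =>
    rw [mem_Vset_zero_iff_mem_baseEdge, ← map_baseEdge_of_mem_AutE hσ]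
    exact Sym2.mem_map.mpr ⟨v, (mem_Vset_zero_iff_mem_baseEdge v).mp hv, rfl⟩
  | succ t ih =>
    rcases hv with hv | ⟨x, hx, hxv⟩
    · exact Vset_mono t.le_succ (ih hv)
    by_cases htr : t < r
    · let x' : {v // v ∈ Vset X a b (r + 1)} := ⟨x, Vset_mono (by omega) hx⟩
      exact .inr ⟨_, ih (v := x') hx, adj_apply_of_mem_AutE hab hσ (Vset_mono htr.le hx) hxv⟩
    · exact Vset_mono (by omega) (σ v).2

theorem apply_mem_Vset_iff_of_mem_AutE (hab : X.Adj a b)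
    {σ : Perm {v // v ∈ Vset X a b (r + 1)}} (hσ : σ ∈ AutE X a b (r + 1)) (t : ℕ)
    (v : {v // v ∈ Vset X a b (r + 1)}) : (σ v).1 ∈ Vset X a b t ↔ v.1 ∈ Vset X a b t :=
  ⟨fun h => by
    simpa using apply_mem_Vset_of_mem_AutE hab ((autESubgroup X a b (r + 1)).inv_mem hσ) t h,
    apply_mem_Vset_of_mem_AutE hab hσ t⟩

theorem adj_apply_iff_of_mem_AutE (hab : X.Adj a b) {σ : Perm {v // v ∈ Vset X a b (r + 1)}}
    (hσ : σ ∈ AutE X a b (r + 1)) {x y : {v // v ∈ Vset X a b (r + 1)}}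
    (hx : x.1 ∈ Vset X a b r) : X.Adj (σ x).1 (σ y).1 ↔ X.Adj x.1 y.1 :=
  ⟨fun h => by
    simpa using adj_apply_of_mem_AutE hab ((autESubgroup X a b (r + 1)).inv_mem hσ)
      ((apply_mem_Vset_iff_of_mem_AutE hab hσ r x).mpr hx) h,
    adj_apply_of_mem_AutE hab hσ hx⟩

def restrictPerm (hab : X.Adj a b) (σ : autESubgroup X a b (r + 1)) :
    Perm {v // v ∈ Vset X a b r} :=
  (subtypeSubtypeEquivSubtype fun h => Vset_mono r.le_succ h).permCongr
    (σ.1.subtypePerm (apply_mem_Vset_iff_of_mem_AutE hab σ.2 r))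

theorem restrictPerm_apply (hab : X.Adj a b) (σ : autESubgroup X a b (r + 1))
    (v : {v // v ∈ Vset X a b r}) :
    (restrictPerm hab σ v).1 = (σ.1 ⟨v.1, Vset_mono r.le_succ v.2⟩).1 :=
  rfl

theorem restrictPerm_mem_AutE (hab : X.Adj a b) (σ : autESubgroup X a b (r + 1)) :
    restrictPerm hab σ ∈ AutE X a b r := by
  refine ⟨fun x y => ?_, fun _ _ => σ.2.2 _ _⟩
  simp only [restrictPerm_apply]
  cases r with
  | zero =>
    simp only [Eset, mem_singleton_iff]
    exact (mk_val_eq_iff_eq_baseEdge ⟨x.1, Vset_mono zero_le_one x.2⟩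
      ⟨y.1, Vset_mono zero_le_one y.2⟩).trans
      ((map_eq_baseEdge_iff (map_baseEdge_of_mem_AutE σ.2) _).symm.trans
        (mk_val_eq_iff_eq_baseEdge _ _).symm)
  | succ r =>
    simp only [mem_Eset_succ_iff hab, apply_mem_Vset_iff_of_mem_AutE hab σ.2]
    exact and_congr_left fun _ => (adj_apply_iff_of_mem_AutE hab σ.2 (x := ⟨x.1, Vset_mono r.succ.le_succ x.2⟩)
      (y := ⟨y.1, Vset_mono r.succ.le_succ y.2⟩) x.2).symm

def restrictAutE (hab : X.Adj a b) (r : ℕ) :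
    autESubgroup X a b (r + 1) →* autESubgroup X a b r where
  toFun σ := ⟨restrictPerm hab σ, restrictPerm_mem_AutE hab σ⟩
  map_one' := rfl
  map_mul' _ _ := rfl

theorem apply_eq_self_of_mem_ker_restrictAutE (hab : X.Adj a b)
    {σ : autESubgroup X a b (r + 1)} (hσ : σ ∈ (restrictAutE hab r).ker)
    {v : {v // v ∈ Vset X a b (r + 1)}} (hv : v.1 ∈ Vset X a b r) : σ.1 v = v :=
  Subtype.ext (congrArg (fun τ : autESubgroup X a b r => (τ.1 ⟨v.1, hv⟩).1) hσ)

end Restriction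

section TwoGroup

variable {V : Type*} {X : SimpleGraph V} {a b : V} {r : ℕ}

theorem sq_eq_one_of_mem_AutE_of_forall_mem_Vset [Finite V] (hab : X.Adj a b)
    (htern : ∀ v : V, (X.neighborSet v).ncard ≤ 3) {τ : Perm {v // v ∈ Vset X a b (r + 1)}}
    (hτ : τ ∈ AutE X a b (r + 1)) (hfix : ∀ v, v.1 ∈ Vset X a b r → τ v = v) : τ ^ 2 = 1 := by
  refine Equiv.ext fun v => ?_
  rw [sq, Perm.mul_apply, Perm.one_apply]
  by_cases hv : v.1 ∈ Vset X a b r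
  · rw [hfix v hv, hfix v hv]
  obtain ⟨x, hx, hxv⟩ := v.2.resolve_left hv
  obtain ⟨w, hw, hxw⟩ := exists_adj_mem_Vset hab hx
  let x' : {v // v ∈ Vset X a b (r + 1)} := ⟨x, Vset_mono r.le_succ hx⟩
  -- `τ` permutes the neighbours of the fixed vertex `x` lying outside `Vset r`; there are at most two.
  let s : Set {v // v ∈ Vset X a b (r + 1)} := {u | X.Adj x u.1 ∧ u.1 ∉ Vset X a b r}
  have hs : s.ncard ≤ 2 := by
    have hle : s.ncard ≤ (X.neighborSet x \ Vset X a b r).ncard :=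
      ncard_le_ncard_of_injOn Subtype.val (fun _ hu => hu) Subtype.val_injective.injOn
    have := X.ncard_neighborSet_diff_lt hxw hw
    have := htern x
    omega
  have hmaps : MapsTo τ s s := by
    rintro u ⟨hxu, hu⟩
    refine ⟨?_, fun h => hu ((apply_mem_Vset_iff_of_mem_AutE hab hτ r u).mp h)⟩
    simpa only [hfix x' hx] using adj_apply_of_mem_AutE hab hτ (x := x') hx hxu
  exact τ.injective.apply_apply_eq_of_mapsTo_of_ncard_le_two (toFinite s) hs hmaps ⟨hxv, hv⟩

theorem isPGroup_ker_restrictAutE [Finite V] (hab : X.Adj a b)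
    (htern : ∀ v : V, (X.neighborSet v).ncard ≤ 3) : IsPGroup 2 (restrictAutE hab r).ker :=
  fun σ => ⟨1, Subtype.ext <| Subtype.ext <| sq_eq_one_of_mem_AutE_of_forall_mem_Vset hab htern
    σ.1.2 fun _ => apply_eq_self_of_mem_ker_restrictAutE hab σ.2⟩

theorem isPGroup_autESubgroup [Finite V] (hab : X.Adj a b)
    (htern : ∀ v : V, (X.neighborSet v).ncard ≤ 3) : ∀ r, IsPGroup 2 (autESubgroup X a b r)
  | 0 => by
    classical
    refine fun σ => ⟨1, Subtype.ext ?_⟩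
    have hσ : σ.1 ∈ AutE X a b 0 := σ.2
    rw [AutE_zero hab] at hσ
    rcases hσ with hσ | hσ
    · simp [hσ]
    · simp [mem_singleton_iff.mp hσ, sq]
  | r + 1 =>
    have htop := ((isPGroup_autESubgroup hab htern r).to_subgroup ⊤).comap_of_ker_isPGroup _
      (isPGroup_ker_restrictAutE hab htern)
    Subgroup.comap_top (restrictAutE hab r) ▸ htop |>.of_equiv Subgroup.topEquiv

end TwoGroup

theorem stmt17 {V : Type*} [Fintype V] [DecidableEq V] (X : SimpleGraph V)
    (htern : ∀ v : V, (X.neighborSet v).ncard ≤ 3)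
    (a b : V) (hab : X.Adj a b) :
    AutE X a b 0 =
      {1, Equiv.swap (⟨a, by simp [Vset]⟩ : {v : V // v ∈ Vset X a b 0})
        (⟨b, by simp [Vset]⟩ : {v : V // v ∈ Vset X a b 0})} ∧
    ∀ r : ℕ, ∃ k : ℕ, (AutE X a b r).ncard = 2 ^ k := by
  refine ⟨AutE_zero hab, fun r => ?_⟩
  rw [← Nat.card_coe_set_eq]
  change ∃ k, Nat.card (autESubgroup X a b r) = 2 ^ k
  exact IsPGroup.iff_card.mp (isPGroup_autESubgroup hab htern r)
end
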